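/- arXiv:2104.11161 — 5 statements merged into one kernel-verified Lean document; each statement's English description precedes it below -/
import Mathlib

section
/- If f : ℝ≥0 → ℝ is square integrable (f ∈ L²(ℝ≥0, ℝ)), then for almost every x ≥ 0, the sequence f(n·x) converges to 0 as n → ∞. -/
/-! For `F ≥ 0` and `0 < a`, the substitution `y = n x` gives
`∫_a^b ∑_{n ≥ 1} F (n x) dx = ∫_0^∞ F y · ∑_{n a < y < n b} n⁻¹ dy ≤ (b / a) ∫_0^∞ F`,
because fewer than `y / a` indices `n` contribute, each with `n⁻¹ < b / y`. Applied to
`F = ‖f‖ₑ ^ p`, this makes `∑ₙ ‖f (n x)‖ₑ ^ p` finite for almost every `x ∈ (a, b)`, so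
`f (n x) → 0` there; the intervals `(1 / k, k)` exhaust `(0, ∞)`. -/

open MeasureTheory Filter Set Topology
open scoped ENNReal

lemma setLIntegral_Ioo_comp_const_mul (F : ℝ → ℝ≥0∞) {c : ℝ} (hc : 0 < c) (a b : ℝ) :
    ∫⁻ x in Ioo a b, F (c * x) = ENNReal.ofReal c⁻¹ * ∫⁻ y in Ioo (c * a) (c * b), F y := by
  have hmp : MeasurePreserving (c * ·) volume (ENNReal.ofReal |c⁻¹| • volume) :=
    ⟨measurable_const_mul c, Real.map_volume_mul_left hc.ne'⟩
  have hpre : (c * ·) ⁻¹' Ioo (c * a) (c * b) = Ioo a b := by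
    rw [preimage_const_mul_Ioo₀ _ _ hc, mul_div_cancel_left₀ _ hc.ne',
      mul_div_cancel_left₀ _ hc.ne']
  rw [← hpre, hmp.setLIntegral_comp_preimage_emb
    (Homeomorph.mulLeft₀ c hc.ne').measurableEmbedding, Measure.restrict_smul,
    lintegral_smul_measure, abs_of_pos (inv_pos.2 hc), smul_eq_mul]

lemma AEMeasurable.comp_const_mul_restrict_Ioo {β : Type*} [MeasurableSpace β] {F : ℝ → β}
    (hF : AEMeasurable F (volume.restrict (Ioi 0))) {c a b : ℝ} (hc : 0 < c) (ha : 0 ≤ a) :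
    AEMeasurable (fun x => F (c * x)) (volume.restrict (Ioo a b)) :=
  hF.comp_quasiMeasurePreserving <| (Measure.quasiMeasurePreserving_smul volume hc.ne').restrict
    fun _ hx => mul_pos hc (ha.trans_lt hx.1)

lemma tsum_indicator_Ioo_nat_succ_mul_le {a : ℝ} (ha : 0 < a) (b y : ℝ) :
    ∑' n : ℕ, (Ioo ((n + 1) * a) ((n + 1) * b)).indicator
      (fun _ => ENNReal.ofReal (n + 1 : ℝ)⁻¹) y ≤ ENNReal.ofReal (b / a) := by
  rcases le_or_gt y 0 with hy | hy
  · refine le_of_eq_of_le (ENNReal.tsum_eq_zero.2 fun n => indicator_of_notMem ?_ _) zero_le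
    exact fun h => (hy.trans_lt (h.1.trans' (by positivity))).false
  set N := ⌊y / a⌋₊
  have hsupp : ∀ n ∉ Finset.range N, (Ioo ((n + 1) * a) ((n + 1) * b)).indicator
      (fun _ => ENNReal.ofReal (n + 1 : ℝ)⁻¹) y = 0 := by
    refine fun n hn => indicator_of_notMem (fun h => hn ?_) _
    have : (n + 1 : ℝ) ≤ y / a := by rw [le_div_iff₀ ha]; exact h.1.le
    exact Finset.mem_range.2 (Nat.lt_of_succ_le (Nat.le_floor (by exact_mod_cast this)))
  have hterm : ∀ n : ℕ, (Ioo ((n + 1) * a) ((n + 1) * b)).indicator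
      (fun _ => ENNReal.ofReal (n + 1 : ℝ)⁻¹) y ≤ ENNReal.ofReal (b / y) := by
    intro n
    refine indicator_apply_le' (fun h => ENNReal.ofReal_le_ofReal ?_) fun _ => zero_le
    rw [le_div_iff₀ hy, inv_mul_le_iff₀ (by positivity)]
    exact h.2.le
  calc _ = ∑ n ∈ Finset.range N, (Ioo ((n + 1) * a) ((n + 1) * b)).indicator
        (fun _ => ENNReal.ofReal (n + 1 : ℝ)⁻¹) y := tsum_eq_sum hsupp
    _ ≤ N * ENNReal.ofReal (b / y) := by
        simpa using Finset.sum_le_card_nsmul (Finset.range N) _ _ fun n _ => hterm n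
    _ ≤ ENNReal.ofReal (y / a) * ENNReal.ofReal (b / y) := by
        gcongr
        rw [← ENNReal.ofReal_natCast]
        exact ENNReal.ofReal_le_ofReal (Nat.floor_le (by positivity))
    _ = ENNReal.ofReal (b / a) := by
        rw [← ENNReal.ofReal_mul (by positivity)]
        congr 1
        field_simp

lemma lintegral_Ioo_tsum_comp_nat_succ_mul_le {F : ℝ → ℝ≥0∞}
    (hF : AEMeasurable F (volume.restrict (Ioi 0))) {a : ℝ} (ha : 0 < a) (b : ℝ) :
    ∫⁻ x in Ioo a b, ∑' n : ℕ, F ((n + 1) * x)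
      ≤ ENNReal.ofReal (b / a) * ∫⁻ y in Ioi 0, F y := by
  set I : ℕ → Set ℝ := fun n => Ioo ((n + 1) * a) ((n + 1) * b)
  have hI : ∀ n, I n ⊆ Ioi 0 := fun n y hy => hy.1.trans' (by positivity)
  have hsubst : ∀ n : ℕ, ∫⁻ x in Ioo a b, F ((n + 1) * x)
      = ∫⁻ y in Ioi 0, (I n).indicator (fun _ => ENNReal.ofReal (n + 1 : ℝ)⁻¹) y * F y := by
    intro n
    simp_rw [← indicator_mul_left]
    rw [setLIntegral_Ioo_comp_const_mul F (by positivity),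
      ← lintegral_const_mul' _ _ ENNReal.ofReal_ne_top, lintegral_indicator measurableSet_Ioo,
      Measure.restrict_restrict_of_subset (hI n)]
  calc ∫⁻ x in Ioo a b, ∑' n : ℕ, F ((n + 1) * x)
      = ∑' n : ℕ, ∫⁻ x in Ioo a b, F ((n + 1) * x) :=
        lintegral_tsum fun n => hF.comp_const_mul_restrict_Ioo (by positivity) ha.le
    _ = ∫⁻ y in Ioi 0,
          (∑' n : ℕ, (I n).indicator (fun _ => ENNReal.ofReal (n + 1 : ℝ)⁻¹) y) * F y := by
        simp_rw [hsubst, ← ENNReal.tsum_mul_right]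
        exact (lintegral_tsum fun n =>
          (aemeasurable_const.indicator measurableSet_Ioo).mul hF).symm
    _ ≤ ∫⁻ y in Ioi 0, ENNReal.ofReal (b / a) * F y :=
        lintegral_mono fun y => mul_le_mul_left (tsum_indicator_Ioo_nat_succ_mul_le ha b y) _
    _ = ENNReal.ofReal (b / a) * ∫⁻ y in Ioi 0, F y :=
        lintegral_const_mul' _ _ ENNReal.ofReal_ne_top

lemma Ioi_zero_eq_iUnion_Ioo_inv : Ioi (0 : ℝ) = ⋃ k : ℕ, Ioo (k + 1 : ℝ)⁻¹ (k + 1) := by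
  ext x
  simp only [mem_Ioi, mem_iUnion, mem_Ioo]
  refine ⟨fun hx => ?_, fun ⟨k, hk, _⟩ => hk.trans' (by positivity)⟩
  obtain ⟨k, hk⟩ := exists_nat_gt (max x x⁻¹)
  have hk' : max x x⁻¹ < k + 1 := hk.trans (lt_add_one _)
  exact ⟨k, inv_lt_of_inv_lt₀ hx ((le_max_right _ _).trans_lt hk'), (le_max_left _ _).trans_lt hk'⟩

lemma ae_tsum_comp_nat_succ_mul_ne_top {F : ℝ → ℝ≥0∞}
    (hF : AEMeasurable F (volume.restrict (Ioi 0))) (hint : ∫⁻ y in Ioi 0, F y ≠ ∞) :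
    ∀ᵐ x ∂volume.restrict (Ioi 0), ∑' n : ℕ, F ((n + 1) * x) ≠ ∞ := by
  rw [Ioi_zero_eq_iUnion_Ioo_inv, ae_restrict_iUnion_iff]
  intro k
  have hpos : (0 : ℝ) < (k + 1 : ℝ)⁻¹ := by positivity
  refine (ae_lt_top' (AEMeasurable.tsum fun n =>
    hF.comp_const_mul_restrict_Ioo (by positivity) hpos.le) ?_).mono fun _ => LT.lt.ne
  exact ne_top_of_le_ne_top (ENNReal.mul_ne_top ENNReal.ofReal_ne_top hint)
    (lintegral_Ioo_tsum_comp_nat_succ_mul_le hF hpos _)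

lemma tendsto_zero_of_tsum_rpow_enorm_ne_top {E : Type*} [NormedAddCommGroup E] {u : ℕ → E}
    {q : ℝ} (hq : 0 < q) (h : ∑' n, ‖u n‖ₑ ^ q ≠ ∞) : Tendsto u atTop (𝓝 0) := by
  rw [tendsto_zero_iff_enorm_tendsto_zero]
  have := ((ENNReal.continuous_rpow_const (y := q⁻¹)).tendsto 0).comp
    (ENNReal.tendsto_atTop_zero_of_tsum_ne_top h)
  simpa [Function.comp_def, ← ENNReal.rpow_mul, hq.ne', ENNReal.zero_rpow_of_pos (inv_pos.2 hq)]
    using this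

theorem MeasureTheory.MemLp.ae_tendsto_comp_nat_mul {E : Type*} [NormedAddCommGroup E] {f : ℝ → E}
    {p : ℝ≥0∞} (hp0 : p ≠ 0) (hp : p ≠ ∞) (hf : MemLp f p (volume.restrict (Ioi 0))) :
    ∀ᵐ x ∂volume.restrict (Ioi 0), Tendsto (fun n : ℕ => f (n * x)) atTop (𝓝 0) := by
  have hint := (lintegral_rpow_enorm_lt_top_of_eLpNorm_lt_top hp0 hp hf.2).ne
  filter_upwards [ae_tsum_comp_nat_succ_mul_ne_top (hf.1.enorm.pow_const _) hint] with x hx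
  rw [← tendsto_add_atTop_iff_nat 1]
  push_cast
  exact tendsto_zero_of_tsum_rpow_enorm_ne_top (ENNReal.toReal_pos hp0 hp) hx

theorem l2_almost_asymptotic (f : ℝ → ℝ)
    (hf : MemLp f 2 (volume.restrict (Set.Ioi (0:ℝ)))) :
    ∀ᵐ x ∂(volume.restrict (Set.Ioi (0:ℝ))),
      Tendsto (fun n : ℕ => f (n * x)) atTop (nhds 0) :=
  hf.ae_tendsto_comp_nat_mul two_ne_zero ENNReal.ofNat_ne_top
end

section
/- Let π(α) = (⟨α,α⟩ - κ²)/(ε κ²) for α ∈ ℝ^k with κ, ε > 0, and define Proj(α₁, α₂) = α₂ if π(α₁) ≤ 0 or ⟨∇π(α₁), α₂⟩ ≤ 0, and otherwise Proj(α₁, α₂) = α₂ - (∇π(α₁)/‖∇π(α₁)‖)·⟨∇π(α₁)/‖∇π(α₁)‖, α₂⟩·π(α₁). Then for every α* with π(α*) ≤ 0 and all α₁, α₂ ∈ ℝ^k, one has ⟨α₁ - α*, Proj(α₁, α₂) - α₂⟩ ≤ 0. -/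
open scoped RealInnerProductSpace
open scoped Classical

noncomputable def piFn (κ ε : ℝ) {k : ℕ} (α : EuclideanSpace ℝ (Fin k)) : ℝ :=
  (⟪α, α⟫ - κ ^ 2) / (ε * κ ^ 2)

noncomputable def gradPi (κ ε : ℝ) {k : ℕ} (α : EuclideanSpace ℝ (Fin k)) :
    EuclideanSpace ℝ (Fin k) :=
  (2 / (ε * κ ^ 2)) • α

noncomputable def projOp (κ ε : ℝ) {k : ℕ} (α₁ α₂ : EuclideanSpace ℝ (Fin k)) :
    EuclideanSpace ℝ (Fin k) :=
  if piFn κ ε α₁ ≤ 0 ∨ ⟪gradPi κ ε α₁, α₂⟫ ≤ 0 then α₂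
  else α₂ - (piFn κ ε α₁ * (⟪gradPi κ ε α₁, α₂⟫ / ‖gradPi κ ε α₁‖ ^ 2)) • gradPi κ ε α₁

/-! When `Proj` acts, it subtracts a nonnegative multiple of `∇π(α₁)`, a positive multiple of
`α₁`, and it acts only where `‖α₁‖ > κ ≥ ‖α*‖`. By Cauchy–Schwarz
`⟪α₁ - α*, α₁⟫ ≥ ‖α₁‖ (‖α₁‖ - ‖α*‖) ≥ 0`, so the correction makes a nonpositive inner product
with `α₁ - α*`. -/

theorem real_inner_sub_self_nonneg {E : Type*} [NormedAddCommGroup E] [InnerProductSpace ℝ E]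
    {x y : E} (h : ‖y‖ ≤ ‖x‖) : 0 ≤ ⟪x - y, x⟫ := by
  rw [inner_sub_left, real_inner_self_eq_norm_sq]
  nlinarith [real_inner_le_norm y x, norm_nonneg x]

theorem piFn_nonpos_iff {κ ε : ℝ} (hκ : 0 < κ) (hε : 0 < ε) {k : ℕ}
    (α : EuclideanSpace ℝ (Fin k)) : piFn κ ε α ≤ 0 ↔ ‖α‖ ≤ κ := by
  rw [piFn, div_le_iff₀ (by positivity), zero_mul, sub_nonpos, real_inner_self_eq_norm_sq,
    sq_le_sq₀ (norm_nonneg α) hκ.le]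

theorem inner_sub_gradPi_nonneg {κ ε : ℝ} (hε : 0 ≤ ε) {k : ℕ}
    {α αstar : EuclideanSpace ℝ (Fin k)} (h : ‖αstar‖ ≤ ‖α‖) :
    0 ≤ ⟪α - αstar, gradPi κ ε α⟫ := by
  rw [gradPi, inner_smul_right]
  exact mul_nonneg (by positivity) (real_inner_sub_self_nonneg h)

theorem proj_convexity {k : ℕ} (κ ε : ℝ) (hκ : 0 < κ) (hε : 0 < ε)
    (αstar : EuclideanSpace ℝ (Fin k)) (hstar : piFn κ ε αstar ≤ 0)
    (α₁ α₂ : EuclideanSpace ℝ (Fin k)) :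
    ⟪α₁ - αstar, projOp κ ε α₁ α₂ - α₂⟫ ≤ 0 := by
  rw [projOp]
  split_ifs with h
  · simp
  obtain ⟨hpi, hgrad⟩ : 0 < piFn κ ε α₁ ∧ 0 < ⟪gradPi κ ε α₁, α₂⟫ := by
    simpa only [not_or, not_le] using h
  have hnorm : ‖αstar‖ ≤ ‖α₁‖ :=
    ((piFn_nonpos_iff hκ hε αstar).1 hstar).trans
      (not_le.1 ((piFn_nonpos_iff hκ hε α₁).not.1 hpi.not_ge)).le
  rw [sub_sub_cancel_left, inner_neg_right, neg_nonpos, inner_smul_right]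
  exact mul_nonneg (mul_nonneg hpi.le (div_nonneg hgrad.le (sq_nonneg _)))
    (inner_sub_gradPi_nonneg hε.le hnorm)
end

section
/- With π and Proj as defined for the projection operator, any solution α₁ : ℝ≥0 → ℝ^k of the ODE α₁'(t) = Proj(α₁(t), α₂(t)) (for continuous α₂) with initial condition α₁(0) ∈ Ω₁ = {α : π(α) ≤ 1} satisfies α₁(t) ∈ Ω₁ for all t ≥ 0. -/
open scoped RealInnerProductSpace
open scoped Classical

/-
Along a solution, `t ↦ π(α₁ t)` has derivative `⟪∇π(α₁), Proj(α₁, α₂)⟫`. When the else-branch of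
`Proj` is active this equals `(1 - π(α₁)) ⟪∇π(α₁), α₂⟫`, and otherwise it is `⟪∇π(α₁), α₂⟫ ≤ 0`;
so wherever `π(α₁) ≥ 1` the derivative is nonpositive and `π(α₁)` cannot cross the level `1`.
-/

open Set

theorem image_le_of_deriv_right_nonpos_above {f f' : ℝ → ℝ} {a b c : ℝ}
    (hf : ContinuousOn f (Icc a b)) (hf' : ∀ x ∈ Ico a b, HasDerivWithinAt f (f' x) (Ici x) x)
    (ha : f a ≤ c) (bound : ∀ x ∈ Ico a b, c < f x → f' x ≤ 0) :
    ∀ ⦃x⦄, x ∈ Icc a b → f x ≤ c := by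
  intro x hx
  refine le_of_forall_pos_le_add fun δ hδ => ?_
  have hpos : 0 < x - a + 1 := by linarith [hx.1]
  set r := δ / (x - a + 1)
  have hr : 0 < r := by positivity
  -- `f` can only meet the strictly increasing fence `c + r (y - a + 1)` where `f > c`,
  -- and there `f' ≤ 0 < r`, so it never crosses it.
  have hB : ∀ y, HasDerivAt (fun y => c + r * (y - a + 1)) r y := fun y =>
    (((hasDerivAt_id y).sub_const a).add_const 1 |>.const_mul r |>.const_add c).congr_deriv
      (mul_one r)
  have fence := image_le_of_deriv_right_lt_deriv_boundary hf hf'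
    (by simpa using ha.trans (le_add_of_nonneg_right hr.le)) hB
    (fun y hy hfy => (bound y hy (by nlinarith [hy.1])).trans_lt hr) hx
  calc f x ≤ c + r * (x - a + 1) := fence
    _ = c + δ := by simp only [r]; field_simp

theorem inner_sub_smul_inner_div_norm_sq {E : Type*} [NormedAddCommGroup E]
    [InnerProductSpace ℝ E] {g : E} (hg : g ≠ 0) (p : ℝ) (β : E) :
    ⟪g, β - (p * (⟪g, β⟫ / ‖g‖ ^ 2)) • g⟫ = (1 - p) * ⟪g, β⟫ := by
  have : ‖g‖ ^ 2 ≠ 0 := by positivity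
  rw [inner_sub_right, real_inner_smul_right, real_inner_self_eq_norm_sq]
  field_simp

theorem inner_gradPi_projOp_nonpos (κ ε : ℝ) {k : ℕ} {α : EuclideanSpace ℝ (Fin k)}
    (hα : 1 ≤ piFn κ ε α) (β : EuclideanSpace ℝ (Fin k)) :
    ⟪gradPi κ ε α, projOp κ ε α β⟫ ≤ 0 := by
  unfold projOp
  split_ifs with h
  · exact h.resolve_left (by linarith)
  · push Not at h
    have hg : gradPi κ ε α ≠ 0 := fun h0 => by simp [h0] at h
    rw [inner_sub_smul_inner_div_norm_sq hg]
    nlinarith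

theorem HasDerivAt.piFn (κ ε : ℝ) {k : ℕ} {γ : ℝ → EuclideanSpace ℝ (Fin k)}
    {γ' : EuclideanSpace ℝ (Fin k)} {t : ℝ} (hγ : HasDerivAt γ γ' t) :
    HasDerivAt (fun s => piFn κ ε (γ s)) ⟪gradPi κ ε (γ t), γ'⟫ t := by
  refine ((hγ.inner ℝ hγ).sub_const (κ ^ 2)).div_const (ε * κ ^ 2) |>.congr_deriv ?_
  rw [gradPi, real_inner_smul_left, real_inner_comm γ']
  ring

theorem proj_forward_invariance_general {k : ℕ} (κ ε : ℝ)
    (α₁ α₂ : ℝ → EuclideanSpace ℝ (Fin k))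
    (hode : ∀ t, 0 ≤ t → HasDerivAt α₁ (projOp κ ε (α₁ t) (α₂ t)) t)
    (h0 : piFn κ ε (α₁ 0) ≤ 1) :
    ∀ t, 0 ≤ t → piFn κ ε (α₁ t) ≤ 1 := by
  have hderiv : ∀ t, 0 ≤ t → HasDerivAt (fun s => piFn κ ε (α₁ s))
      ⟪gradPi κ ε (α₁ t), projOp κ ε (α₁ t) (α₂ t)⟫ t :=
    fun t ht => (hode t ht).piFn κ ε
  intro T hT
  exact image_le_of_deriv_right_nonpos_above
    (fun t ht => (hderiv t ht.1).continuousAt.continuousWithinAt)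
    (fun t ht => (hderiv t ht.1).hasDerivWithinAt) h0
    (fun t _ ht => inner_gradPi_projOp_nonpos κ ε ht.le (α₂ t)) ⟨hT, le_rfl⟩

theorem proj_forward_invariance {k : ℕ} (κ ε : ℝ) (hκ : 0 < κ) (hε : 0 < ε)
    (α₁ α₂ : ℝ → EuclideanSpace ℝ (Fin k)) (hα₂ : Continuous α₂)
    (hode : ∀ t, 0 ≤ t → HasDerivAt α₁ (projOp κ ε (α₁ t) (α₂ t)) t)
    (h0 : piFn κ ε (α₁ 0) ≤ 1) :
    ∀ t, 0 ≤ t → piFn κ ε (α₁ t) ≤ 1 :=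
  proj_forward_invariance_general κ ε α₁ α₂ hode h0
end

section
/- Let ỹ : ℝ≥0 → ℝ be measurable with ∫₀^∞ ỹ(s)² ds < ∞. Then ỹ converges to 0 almost asymptotically: for almost every x ≥ 0, ỹ(n x) → 0 as n → ∞. -/
/-!
On a dyadic interval `(a, 2a]`, the substitution `t = k x` gives
`∫_a^{2a} ∑_k g(k x) dx = ∫ g(t) ∑_{ka < t ≤ 2ka} k⁻¹ dt ≤ ∫_0^∞ g`, since the at most `m`
admissible `k` all satisfy `k ≥ m = ⌈t / 2a⌉`. Hence `∑_k g(k x) < ∞`, so `g(k x) → 0`, for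
almost every `x` in `(a, 2a]`, and countably many dyadic intervals cover `(0, ∞)`. Apply this to
`g = ỹ²`.
-/

open MeasureTheory Filter Set ENNReal Topology

lemma setLIntegral_comp_const_mul {g : ℝ → ℝ≥0∞} (hg : Measurable g) {c : ℝ} (hc : c ≠ 0)
    {s : Set ℝ} (hs : MeasurableSet s) :
    ∫⁻ x in (c * ·) ⁻¹' s, g (c * x) = ENNReal.ofReal |c⁻¹| * ∫⁻ t in s, g t := by
  rw [← lintegral_map hg (measurable_const_mul c),
    ← Measure.restrict_map (measurable_const_mul c) hs,
    Real.map_volume_mul_left hc, Measure.restrict_smul, lintegral_smul_measure, smul_eq_mul]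

lemma tsum_indicator_Ioc_natCast_mul_inv_le_one {a : ℝ} (ha : 0 < a) (t : ℝ) :
    ∑' k : ℕ, (Ioc (k * a) (2 * (k * a))).indicator (fun _ => (k : ℝ≥0∞)⁻¹) t ≤ 1 := by
  set m := ⌈t / (2 * a)⌉₊
  have hbounds : ∀ k : ℕ, t ∈ Ioc (k * a) (2 * (k * a)) → m ≤ k ∧ k < 2 * m := by
    rintro k ⟨hlt, hle⟩
    have hm : t / (2 * a) ≤ m := Nat.le_ceil _
    rw [div_le_iff₀ (by positivity)] at hm
    constructor
    · exact Nat.ceil_le.2 <| (div_le_iff₀ (by positivity)).2 (by linarith)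
    · exact_mod_cast (show (k : ℝ) < 2 * m by nlinarith)
  have hsupport : ∀ k ∉ Finset.Ico m (2 * m),
      (Ioc (k * a) (2 * (k * a))).indicator (fun _ => (k : ℝ≥0∞)⁻¹) t = 0 := fun k hk =>
    indicator_of_notMem (fun ht => hk (Finset.mem_Ico.2 (hbounds k ht))) _
  have hterm : ∀ k : ℕ,
      (Ioc (k * a) (2 * (k * a))).indicator (fun _ => (k : ℝ≥0∞)⁻¹) t ≤ (m : ℝ≥0∞)⁻¹ := by
    intro k
    by_cases ht : t ∈ Ioc (k * a) (2 * (k * a))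
    · rw [indicator_of_mem ht]
      exact ENNReal.inv_le_inv.2 (by exact_mod_cast (hbounds k ht).1)
    · simp [indicator_of_notMem ht]
  calc ∑' k : ℕ, (Ioc (k * a) (2 * (k * a))).indicator (fun _ => (k : ℝ≥0∞)⁻¹) t
      = ∑ k ∈ Finset.Ico m (2 * m),
          (Ioc (k * a) (2 * (k * a))).indicator (fun _ => (k : ℝ≥0∞)⁻¹) t := tsum_eq_sum hsupport
    _ ≤ ∑ _k ∈ Finset.Ico m (2 * m), (m : ℝ≥0∞)⁻¹ := Finset.sum_le_sum fun k _ => hterm k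
    _ = m * (m : ℝ≥0∞)⁻¹ := by simp [two_mul]
    _ ≤ 1 := ENNReal.mul_inv_le_one _

lemma lintegral_Ioc_tsum_comp_mul_le {g : ℝ → ℝ≥0∞} (hg : Measurable g) {a : ℝ} (ha : 0 < a) :
    ∫⁻ x in Ioc a (2 * a), ∑' n : ℕ, g ((n + 1 : ℕ) * x) ≤ ∫⁻ t in Ioi 0, g t := by
  set w : ℕ → ℝ → ℝ≥0∞ := fun k => (Ioc (k * a) (2 * (k * a))).indicator fun _ => (k : ℝ≥0∞)⁻¹
  have hscale : ∀ k : ℕ, 0 < k →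
      ∫⁻ x in Ioc a (2 * a), g (k * x) = ∫⁻ t in Ioi 0, w k t * g t := by
    intro k hk
    have hk' : (0 : ℝ) < k := Nat.cast_pos.2 hk
    have hpre : Ioc a (2 * a) = ((k : ℝ) * ·) ⁻¹' Ioc (k * a) (2 * (k * a)) := by
      rw [preimage_const_mul_Ioc₀ _ _ hk', mul_div_cancel_left₀ _ hk'.ne',
        mul_left_comm, mul_div_cancel_left₀ _ hk'.ne']
    have hsub : Ioc ((k : ℝ) * a) (2 * (k * a)) ⊆ Ioi 0 := fun t ht =>
      (mul_pos hk' ha).trans ht.1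
    simp_rw [w, ← indicator_mul_left]
    rw [hpre, setLIntegral_comp_const_mul hg hk'.ne' measurableSet_Ioc,
      setLIntegral_indicator measurableSet_Ioc, inter_eq_left.2 hsub,
      lintegral_const_mul _ hg, abs_inv, abs_of_pos hk', ENNReal.ofReal_inv_of_pos hk',
      ENNReal.ofReal_natCast]
  have hw : ∀ k, Measurable (w k) := fun k => measurable_const.indicator measurableSet_Ioc
  calc ∫⁻ x in Ioc a (2 * a), ∑' n : ℕ, g ((n + 1 : ℕ) * x)
      = ∑' n : ℕ, ∫⁻ x in Ioc a (2 * a), g ((n + 1 : ℕ) * x) :=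
        lintegral_tsum fun n => (hg.comp (measurable_const_mul _)).aemeasurable
    _ = ∑' n : ℕ, ∫⁻ t in Ioi 0, w (n + 1) t * g t :=
        tsum_congr fun n => hscale (n + 1) n.succ_pos
    _ = ∫⁻ t in Ioi 0, (∑' n : ℕ, w (n + 1) t) * g t := by
        simp_rw [← ENNReal.tsum_mul_right]
        exact (lintegral_tsum fun n => ((hw _).mul hg).aemeasurable).symm
    _ ≤ ∫⁻ t in Ioi 0, g t := by
        refine lintegral_mono fun t => mul_le_of_le_one_left zero_le ?_
        exact (ENNReal.tsum_comp_le_tsum_of_injective (add_left_injective 1) (w · t)).trans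
          (tsum_indicator_Ioc_natCast_mul_inv_le_one ha t)

lemma ae_restrict_Ioc_tendsto_comp_mul {g : ℝ → ℝ≥0∞} (hg : Measurable g)
    (hfin : ∫⁻ t in Ioi 0, g t ≠ ∞) {a : ℝ} (ha : 0 < a) :
    ∀ᵐ x ∂volume.restrict (Ioc a (2 * a)), Tendsto (fun n : ℕ => g (n * x)) atTop (𝓝 0) := by
  have hsum_meas : Measurable fun x : ℝ => ∑' n : ℕ, g ((n + 1 : ℕ) * x) :=
    .tsum fun n => hg.comp (measurable_const_mul _)
  have hsum_ne_top := ne_top_of_le_ne_top hfin (lintegral_Ioc_tsum_comp_mul_le hg ha)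
  filter_upwards [ae_lt_top hsum_meas hsum_ne_top] with x hx
  exact (tendsto_add_atTop_iff_nat 1).1 (ENNReal.tendsto_atTop_zero_of_tsum_ne_top hx.ne)

lemma iUnion_Ioc_zpow_eq_Ioi {b : ℝ} (hb : 1 < b) : ⋃ k : ℤ, Ioc (b ^ k) (b ^ (k + 1)) = Ioi 0 := by
  ext x
  simp only [mem_iUnion, mem_Ioi]
  exact ⟨fun ⟨k, hk⟩ => (zpow_pos (by linarith) k).trans hk.1, fun hx => exists_mem_Ioc_zpow hx hb⟩

theorem ae_tendsto_comp_mul_of_lintegral_ne_top {g : ℝ → ℝ≥0∞} (hg : Measurable g)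
    (hfin : ∫⁻ t in Ioi 0, g t ≠ ∞) :
    ∀ᵐ x ∂volume.restrict (Ioi 0), Tendsto (fun n : ℕ => g (n * x)) atTop (𝓝 0) := by
  rw [← iUnion_Ioc_zpow_eq_Ioi one_lt_two, ae_restrict_iUnion_iff]
  intro k
  rw [zpow_add_one₀ two_ne_zero, mul_comm]
  exact ae_restrict_Ioc_tendsto_comp_mul hg hfin (zpow_pos two_pos k)

lemma tendsto_zero_of_tendsto_sq {α : Type*} {l : Filter α} {f : α → ℝ}
    (h : Tendsto (fun x => f x ^ 2) l (𝓝 0)) : Tendsto f l (𝓝 0) := by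
  rw [tendsto_zero_iff_abs_tendsto_zero]
  simpa [Function.comp_def, Real.sqrt_sq_eq_abs] using (Real.continuous_sqrt.tendsto 0).comp h

theorem l2_integral_almost_asymptotic (ytil : ℝ → ℝ) (hmeas : Measurable ytil)
    (hL2 : Integrable (fun s => (ytil s) ^ 2) (volume.restrict (Set.Ioi (0:ℝ)))) :
    ∀ᵐ x ∂(volume.restrict (Set.Ioi (0:ℝ))),
      Tendsto (fun n : ℕ => ytil (n * x)) atTop (nhds 0) := by
  filter_upwards [ae_tendsto_comp_mul_of_lintegral_ne_top (hmeas.pow_const 2).enorm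
    hL2.hasFiniteIntegral.ne] with x hx
  exact tendsto_zero_of_tendsto_sq (tendsto_zero_iff_enorm_tendsto_zero.2 hx)
end

section
/- Let H be a real Hilbert space, T(t) a family of operators with ‖T(t)‖ ≤ M e^{-β t} (M ≥ 1, β > 0), and let w(t) = T(t) w₀ + ∫₀ᵗ T(t-s) f(s) ds where ‖f(s)‖ ≤ ν₁ ‖w(s)‖ + ν₂ + δ for all s ≤ τ, with constants ν₁, ν₂, δ ≥ 0. If (M/β) ν₁ < 1 and the small-gain bound (M‖w₀‖ + (M/β)(ν₂ + δ)) / (1 - (M/β)ν₁) ≤ ρ - ε holds for some ρ > 0, ε > 0, and sup_{s ≤ τ} ‖w(s)‖ is finite, then sup_{s ≤ τ} ‖w(s)‖ ≤ ρ - ε. -/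
/-!
Bounding the forcing by `ν₁ S + ν₂ + δ`, where `S` is the supremum of `‖w‖` on `[0, τ]`, the
variation-of-constants formula and `∫₀ᵗ M e^{-β(t-s)} ds ≤ M / β` give
`S ≤ M ‖w₀‖ + (M / β) (ν₁ S + ν₂ + δ)`. Finiteness of `S` lets us absorb the `ν₁ S` term into the
left-hand side, which is possible exactly when `(M / β) ν₁ < 1`.
-/

open MeasureTheory Real Set intervalIntegral

theorem integral_exp_neg_mul_sub {β : ℝ} (hβ : β ≠ 0) (t : ℝ) :
    ∫ s in (0:ℝ)..t, exp (-β * (t - s)) = (1 - exp (-β * t)) / β := by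
  rw [integral_comp_sub_left (fun u => exp (-β * u)), integral_comp_mul_left (fun u => exp u)
    (neg_ne_zero.2 hβ), integral_exp]
  simp only [sub_self, mul_zero, sub_zero, exp_zero, smul_eq_mul, inv_neg]
  field_simp
  ring

theorem integral_exp_neg_mul_sub_le {β : ℝ} (hβ : 0 < β) (t : ℝ) :
    ∫ s in (0:ℝ)..t, exp (-β * (t - s)) ≤ β⁻¹ := by
  rw [integral_exp_neg_mul_sub hβ.ne', inv_eq_one_div]
  gcongr
  linarith [exp_pos (-β * t)]

section ExpDecay

variable {E F : Type*} [NormedAddCommGroup E] [NormedSpace ℝ E]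
  [NormedAddCommGroup F] [NormedSpace ℝ F]
  {T : ℝ → E →L[ℝ] F} {M β : ℝ}

theorem norm_apply_le_of_exp_decay (hβ : 0 ≤ β)
    (hT : ∀ t, 0 ≤ t → ‖T t‖ ≤ M * exp (-β * t)) {t : ℝ} (ht : 0 ≤ t) (x : E) :
    ‖T t x‖ ≤ M * ‖x‖ := by
  have hM : 0 ≤ M := by simpa using (norm_nonneg _).trans (hT 0 le_rfl)
  refine (T t).le_of_opNorm_le ((hT t ht).trans ?_) x
  exact mul_le_of_le_one_right hM (exp_le_one_iff.2 (by nlinarith))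

theorem norm_integral_convolution_le (hβ : 0 < β)
    (hT : ∀ t, 0 ≤ t → ‖T t‖ ≤ M * exp (-β * t)) {f : ℝ → E} {C t : ℝ} (ht : 0 ≤ t)
    (hf : ∀ s ∈ Icc 0 t, ‖f s‖ ≤ C) :
    ‖∫ s in (0:ℝ)..t, T (t - s) (f s)‖ ≤ M / β * C := by
  have hM : 0 ≤ M := by simpa using (norm_nonneg _).trans (hT 0 le_rfl)
  have hC : 0 ≤ C := (norm_nonneg _).trans (hf 0 ⟨le_rfl, ht⟩)
  have hpointwise : ∀ s ∈ Ioc 0 t, ‖T (t - s) (f s)‖ ≤ M * C * exp (-β * (t - s)) := by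
    intro s hs
    calc ‖T (t - s) (f s)‖ ≤ M * exp (-β * (t - s)) * C :=
          (T _).le_of_opNorm_le_of_le (hT _ (sub_nonneg.2 hs.2)) (hf s (Ioc_subset_Icc_self hs))
      _ = M * C * exp (-β * (t - s)) := by ring
  calc ‖∫ s in (0:ℝ)..t, T (t - s) (f s)‖
      ≤ ∫ s in (0:ℝ)..t, M * C * exp (-β * (t - s)) :=
        norm_integral_le_of_norm_le ht (ae_of_all _ hpointwise)
          (Continuous.intervalIntegrable (by fun_prop) _ _)
    _ = M * C * ∫ s in (0:ℝ)..t, exp (-β * (t - s)) := integral_const_mul _ _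
    _ ≤ M * C * β⁻¹ := by gcongr; exact integral_exp_neg_mul_sub_le hβ t
    _ = M / β * C := by ring

theorem norm_mild_solution_le (hβ : 0 < β)
    (hT : ∀ t, 0 ≤ t → ‖T t‖ ≤ M * exp (-β * t)) (w₀ : E) {f : ℝ → E} {C t : ℝ} (ht : 0 ≤ t)
    (hf : ∀ s ∈ Icc 0 t, ‖f s‖ ≤ C) :
    ‖T t w₀ + ∫ s in (0:ℝ)..t, T (t - s) (f s)‖ ≤ M * ‖w₀‖ + M / β * C :=
  (norm_add_le _ _).trans <| add_le_add (norm_apply_le_of_exp_decay hβ.le hT ht w₀)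
    (norm_integral_convolution_le hβ hT ht hf)

end ExpDecay

theorem le_of_le_add_mul_of_mul_lt_one {S a b k ν r : ℝ} (hS : S ≤ a + k * (ν * S + b))
    (hgain : k * ν < 1) (hr : (a + k * b) / (1 - k * ν) ≤ r) : S ≤ r := by
  rw [div_le_iff₀ (sub_pos.2 hgain)] at hr
  nlinarith

theorem small_gain_sup_bound_general {H : Type*} [NormedAddCommGroup H] [InnerProductSpace ℝ H]
    (T : ℝ → (H →L[ℝ] H)) (M β : ℝ) (hβ : 0 < β)
    (hT : ∀ t, 0 ≤ t → ‖T t‖ ≤ M * Real.exp (-β * t))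
    (w₀ : H) (w f : ℝ → H) (ν₁ ν₂ δ τ ρ ε : ℝ)
    (hν₁ : 0 ≤ ν₁) (hτ : 0 ≤ τ)
    (hw : ∀ t, w t = (T t) w₀ + ∫ s in (0:ℝ)..t, (T (t - s)) (f s))
    (hf : ∀ s, 0 ≤ s → s ≤ τ → ‖f s‖ ≤ ν₁ * ‖w s‖ + ν₂ + δ)
    (hgain : (M / β) * ν₁ < 1)
    (hsg : (M * ‖w₀‖ + (M / β) * (ν₂ + δ)) / (1 - (M / β) * ν₁) ≤ ρ - ε)
    (hbdd : BddAbove ((fun s => ‖w s‖) '' Set.Icc 0 τ)) :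
    sSup ((fun s => ‖w s‖) '' Set.Icc 0 τ) ≤ ρ - ε := by
  set S := sSup ((fun s => ‖w s‖) '' Icc 0 τ)
  have hwS : ∀ s ∈ Icc 0 τ, ‖w s‖ ≤ S := fun s hs => le_csSup hbdd (mem_image_of_mem _ hs)
  have hfS : ∀ s ∈ Icc 0 τ, ‖f s‖ ≤ ν₁ * S + (ν₂ + δ) := fun s hs =>
    (hf s hs.1 hs.2).trans (by rw [← add_assoc]; gcongr; exact hwS s hs)
  have hwt : ∀ t ∈ Icc 0 τ, ‖w t‖ ≤ M * ‖w₀‖ + M / β * (ν₁ * S + (ν₂ + δ)) := fun t ht =>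
    hw t ▸ norm_mild_solution_le hβ hT w₀ ht.1 fun s hs => hfS s ⟨hs.1, hs.2.trans ht.2⟩
  exact le_of_le_add_mul_of_mul_lt_one
    (csSup_le ((nonempty_Icc.2 hτ).image _) (forall_mem_image.2 hwt)) hgain hsg

theorem small_gain_sup_bound {H : Type*} [NormedAddCommGroup H] [InnerProductSpace ℝ H]
    [CompleteSpace H]
    (T : ℝ → (H →L[ℝ] H)) (M β : ℝ) (hM : 1 ≤ M) (hβ : 0 < β)
    (hT : ∀ t, 0 ≤ t → ‖T t‖ ≤ M * Real.exp (-β * t))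
    (w₀ : H) (w f : ℝ → H) (ν₁ ν₂ δ τ ρ ε : ℝ)
    (hν₁ : 0 ≤ ν₁) (hν₂ : 0 ≤ ν₂) (hδ : 0 ≤ δ) (hτ : 0 ≤ τ) (hρ : 0 < ρ) (hε : 0 < ε)
    (hw : ∀ t, w t = (T t) w₀ + ∫ s in (0:ℝ)..t, (T (t - s)) (f s))
    (hf : ∀ s, 0 ≤ s → s ≤ τ → ‖f s‖ ≤ ν₁ * ‖w s‖ + ν₂ + δ)
    (hgain : (M / β) * ν₁ < 1)
    (hsg : (M * ‖w₀‖ + (M / β) * (ν₂ + δ)) / (1 - (M / β) * ν₁) ≤ ρ - ε)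
    (hbdd : BddAbove ((fun s => ‖w s‖) '' Set.Icc 0 τ)) :
    sSup ((fun s => ‖w s‖) '' Set.Icc 0 τ) ≤ ρ - ε :=
  small_gain_sup_bound_general T M β hβ hT w₀ w f ν₁ ν₂ δ τ ρ ε hν₁ hτ hw hf hgain hsg hbdd
end
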